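/- Let d be a square-free integer with d < 0 and let α be an algebraic integer with ℚ(α) = ℚ(√d). If d ≡ 2, 3 (mod 4) then H(α) ≥ |d|, with the minimum attained exactly by elements with minimal polynomial x² − d; if d ≡ 1 (mod 4) then H(α) ≥ (1−d)/4, with the minimum attained exactly by elements with minimal polynomial x² ± x + (1−d)/4. -/

import Mathlib

open NumberField IntermediateField Polynomial

/-!
Write `K = ℚ(√d)`. A generator `α` is `x + y√d` with `y ≠ 0`, so its minimal polynomial
`X² + bX + c` has discriminant `b² - 4c = (2y)²d`; as `d` is squarefree, `e = 2y` is an integer,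
and `4c = b² + e²|d|`. Reducing mod 4, `b² ≡ e²d`: for `d ≡ 2, 3` this forces `e` even, whence
`c ≥ |d|`, and for `d ≡ 1` either `e` is even or `b` is odd, whence `4c ≥ 1 - d`. Since the
height is at least `c`, it is minimal exactly when these bounds are equalities, which pins down
`b` and `c`.
-/

section QuadraticExtension

variable {F K : Type*} [Field F] [Field K] [Algebra F K] {s : K} {d : F}

theorem exists_eq_algebraMap_add_algebraMap_mul_of_mem_adjoin (hs : s ^ 2 = algebraMap F K d)
    {α : K} (hα : α ∈ F⟮s⟯) : ∃ x y : F, α = algebraMap F K x + algebraMap F K y * s := by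
  have hmonic : (X ^ 2 - C d).Monic := monic_X_pow_sub_C d two_ne_zero
  have hroot : aeval s (X ^ 2 - C d) = 0 := by simp [hs]
  have hint : IsIntegral F s := ⟨_, hmonic, hroot⟩
  rw [← mem_toSubalgebra, adjoin_simple_toSubalgebra_of_isAlgebraic hint.isAlgebraic,
    Algebra.adjoin_singleton_eq_range_aeval] at hα
  obtain ⟨f, rfl⟩ := hα
  have hdeg : (f %ₘ (X ^ 2 - C d)).natDegree ≤ 1 := by
    have hne : X ^ 2 - C d ≠ 1 := fun h ↦ by simpa [h] using natDegree_X_pow_sub_C (n := 2) (r := d)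
    have := natDegree_modByMonic_lt f hmonic hne
    rw [natDegree_X_pow_sub_C] at this
    omega
  obtain ⟨y, x, hr⟩ := exists_eq_X_add_C_of_natDegree_le_one hdeg
  refine ⟨x, y, ?_⟩
  rw [AlgHom.toRingHom_eq_coe, RingHom.coe_coe, ← aeval_modByMonic_eq_self_of_root hroot, hr]
  simp [add_comm]

theorem notMem_range_algebraMap_of_sq_eq_of_neg [LinearOrder F] [IsStrictOrderedRing F]
    (hs : s ^ 2 = algebraMap F K d) (hd : d < 0) : s ∉ (algebraMap F K).range := by
  rintro ⟨r, rfl⟩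
  rw [← map_pow, (algebraMap F K).injective.eq_iff] at hs
  nlinarith [sq_nonneg r]

theorem minpoly_algebraMap_add_algebraMap_mul (hs : s ^ 2 = algebraMap F K d) {x y : F}
    (hα : algebraMap F K x + algebraMap F K y * s ∉ (algebraMap F K).range) :
    minpoly F (algebraMap F K x + algebraMap F K y * s) =
      X ^ 2 + C (-(2 * x)) * X + C (x ^ 2 - y ^ 2 * d) := by
  have hmonic : (X ^ 2 + C (-(2 * x)) * X + C (x ^ 2 - y ^ 2 * d)).Monic := by monicity!
  have hdeg : (X ^ 2 + C (-(2 * x)) * X + C (x ^ 2 - y ^ 2 * d)).natDegree = 2 := by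
    compute_degree!
  have hroot : aeval (algebraMap F K x + algebraMap F K y * s)
      (X ^ 2 + C (-(2 * x)) * X + C (x ^ 2 - y ^ 2 * d)) = 0 := by
    simp only [map_add, map_mul, map_sub, map_pow, map_neg, aeval_X, aeval_C, map_ofNat]
    linear_combination (algebraMap F K y) ^ 2 * hs
  have hint : IsIntegral F (algebraMap F K x + algebraMap F K y * s) := ⟨_, hmonic, hroot⟩
  refine (eq_of_monic_of_dvd_of_natDegree_le (minpoly.monic hint) hmonic
    (minpoly.dvd F _ hroot) ?_).symm
  rw [hdeg]
  exact (minpoly.two_le_natDegree_iff hint).mpr hα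

end QuadraticExtension

theorem Polynomial.eq_X_sq_add_C_mul_X_add_C_of_map_eq {P : ℤ[X]} {b c : ℚ}
    (h : P.map (Int.castRingHom ℚ) = X ^ 2 + C b * X + C c) :
    (P.coeff 1 : ℚ) = b ∧ (P.coeff 0 : ℚ) = c ∧ P = X ^ 2 + C (P.coeff 1) * X + C (P.coeff 0) := by
  have hcoeff (n : ℕ) : (P.coeff n : ℚ) = (X ^ 2 + C b * X + C c).coeff n := by
    simp [← h]
  have hb : (P.coeff 1 : ℚ) = b := by simpa using hcoeff 1
  have hc : (P.coeff 0 : ℚ) = c := by simpa using hcoeff 0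
  refine ⟨hb, hc, map_injective (Int.castRingHom ℚ) Int.cast_injective ?_⟩
  simp only [h, Polynomial.map_add, Polynomial.map_mul, Polynomial.map_pow, map_X, map_C,
    Int.coe_castRingHom, hb, hc]

theorem Polynomial.X_sq_add_C_mul_X_add_C_inj {R : Type*} [CommRing R] {b c b' c' : R} :
    X ^ 2 + C b * X + C c = X ^ 2 + C b' * X + C c' ↔ b = b' ∧ c = c' := by
  refine ⟨fun h ↦ ⟨?_, ?_⟩, fun ⟨hb, hc⟩ ↦ hb ▸ hc ▸ rfl⟩
  · simpa using congrArg (coeff · 1) h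
  · simpa using congrArg (coeff · 0) h

theorem Rat.exists_intCast_eq_of_sq_mul_eq_intCast {d n : ℤ} (hd : Squarefree d) {q : ℚ}
    (h : q ^ 2 * d = n) : ∃ e : ℤ, (e : ℚ) = q := by
  have hnum : (q.num : ℚ) = q * q.den := (Rat.mul_den_eq_num q).symm
  have hclear : q.num ^ 2 * d = n * (q.den : ℤ) ^ 2 := by
    have : (q.num : ℚ) ^ 2 * d = n * (q.den : ℚ) ^ 2 := by
      rw [hnum]; linear_combination (q.den : ℚ) ^ 2 * h
    exact_mod_cast this
  have hcop : IsCoprime ((q.den : ℤ) ^ 2) (q.num ^ 2) :=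
    (Int.isCoprime_iff_gcd_eq_one.mpr (by simpa [Int.gcd, Nat.coprime_comm] using q.reduced)).pow
  have hdvd : (q.den : ℤ) * q.den ∣ d := by
    rw [← sq]
    exact hcop.dvd_of_dvd_mul_left ⟨n, by rw [hclear, mul_comm]⟩
  have hden : q.den = 1 := by
    rcases Int.isUnit_iff.mp (hd _ hdvd) with h | h <;> omega
  exact ⟨q.num, Rat.coe_int_num_of_den_eq_one hden⟩

theorem Int.sq_emod_four_eq_zero_or_one (n : ℤ) : n ^ 2 % 4 = 0 ∨ n ^ 2 % 4 = 1 := by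
  rcases Int.even_or_odd n with hn | hn
  · left
    exact Int.emod_eq_zero_of_dvd (by simpa using pow_dvd_pow_of_dvd (even_iff_two_dvd.mp hn) 2)
  · exact Or.inr (Int.sq_mod_four_eq_one_of_odd hn)

theorem Int.sq_emod_four_of_sq_sub_four_mul_eq {b c d e : ℤ} (h : b ^ 2 - 4 * c = e ^ 2 * d) :
    b ^ 2 % 4 = e ^ 2 % 4 * (d % 4) % 4 := by
  rw [← Int.mul_emod]
  omega

theorem height_bound_of_emod_four_eq_two_or_three {b c d e : ℤ} (hd : d < 0)
    (hd4 : d % 4 = 2 ∨ d % 4 = 3) (he : e ≠ 0) (h : b ^ 2 - 4 * c = e ^ 2 * d) :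
    |d| ≤ max 1 (max |b| |c|) ∧ (max 1 (max |b| |c|) = |d| ↔ b = 0 ∧ c = -d) := by
  have he2 : 4 ≤ e ^ 2 := by
    have hmod := Int.sq_emod_four_of_sq_sub_four_mul_eq h
    have : 0 < e ^ 2 := by positivity
    rcases Int.sq_emod_four_eq_zero_or_one b with hb4 | hb4 <;>
      rcases Int.sq_emod_four_eq_zero_or_one e with he4 | he4 <;>
      rcases hd4 with hd4 | hd4 <;> rw [hb4, he4, hd4] at hmod <;> omega
  have hc : -d ≤ c := by nlinarith [sq_nonneg b]
  have hcH : c ≤ max 1 (max |b| |c|) := le_max_of_le_right (le_max_of_le_right (le_abs_self c))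
  rw [abs_of_neg hd]
  refine ⟨hc.trans hcH, fun hH ↦ ?_, ?_⟩
  · have hcd : c = -d := le_antisymm (hcH.trans hH.le) hc
    refine ⟨pow_eq_zero_iff two_ne_zero |>.mp ?_, hcd⟩
    nlinarith [sq_nonneg b]
  · rintro ⟨rfl, rfl⟩
    rw [abs_zero, abs_of_pos (neg_pos.mpr hd), max_eq_right (neg_nonneg.mpr hd.le),
      max_eq_right (by omega)]

theorem height_bound_of_emod_four_eq_one {b c d e : ℤ} (hd : d < 0)
    (hd4 : d % 4 = 1) (he : e ≠ 0) (h : b ^ 2 - 4 * c = e ^ 2 * d) :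
    (1 - d) / 4 ≤ max 1 (max |b| |c|) ∧
      (max 1 (max |b| |c|) = (1 - d) / 4 ↔
        b = 1 ∧ c = (1 - d) / 4 ∨ b = -1 ∧ c = (1 - d) / 4) := by
  have hm : 4 * ((1 - d) / 4) = 1 - d := by omega
  have hlow : 1 - d ≤ 4 * c ∧ (4 * c = 1 - d → b ^ 2 = 1) := by
    have hmod := Int.sq_emod_four_of_sq_sub_four_mul_eq h
    have : 0 < e ^ 2 := by positivity
    rcases Int.sq_emod_four_eq_zero_or_one e with he4 | he4
    · have he2 : 4 ≤ e ^ 2 := by omega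
      have hd3 : d ≤ -3 := by omega
      have := mul_nonneg (sub_nonneg.mpr he2) (neg_nonneg.mpr hd.le)
      exact ⟨by nlinarith [sq_nonneg b], fun hc ↦ by nlinarith [sq_nonneg b]⟩
    · have hb2 : 1 ≤ b ^ 2 := by rw [he4, hd4] at hmod; have := sq_nonneg b; omega
      have := mul_nonneg (sub_nonneg.mpr (show 1 ≤ e ^ 2 by omega)) (neg_nonneg.mpr hd.le)
      exact ⟨by nlinarith, fun hc ↦ by nlinarith⟩
  have hcH : c ≤ max 1 (max |b| |c|) := le_max_of_le_right (le_max_of_le_right (le_abs_self c))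
  refine ⟨by omega, fun hH ↦ ?_, ?_⟩
  · have hcm : c = (1 - d) / 4 := by omega
    exact (sq_eq_one_iff.mp (hlow.2 (by omega))).imp (⟨·, hcm⟩) (⟨·, hcm⟩)
  · have hm1 : 1 ≤ (1 - d) / 4 := by omega
    rintro (⟨rfl, rfl⟩ | ⟨rfl, rfl⟩) <;>
      simp [abs_of_pos (zero_lt_one.trans_le hm1), hm1]

theorem minpoly_int_eq_and_discr_eq_sq_mul {d : ℤ} (hd : d < 0) (hsf : Squarefree d)
    {K : Type*} [Field K] [CharZero K] {s : K} (hs : s ^ 2 = (d : K)) (hsgen : ℚ⟮s⟯ = ⊤)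
    {α : K} (hint : IsIntegral ℤ α) (hgen : ℚ⟮α⟯ = ⊤) :
    minpoly ℤ α = X ^ 2 + C ((minpoly ℤ α).coeff 1) * X + C ((minpoly ℤ α).coeff 0) ∧
      ∃ e : ℤ, e ≠ 0 ∧ (minpoly ℤ α).coeff 1 ^ 2 - 4 * (minpoly ℤ α).coeff 0 = e ^ 2 * d := by
  have hs' : s ^ 2 = algebraMap ℚ K d := by simpa using hs
  have hsQ : s ∉ (algebraMap ℚ K).range :=
    notMem_range_algebraMap_of_sq_eq_of_neg hs' (by exact_mod_cast hd)
  have hαQ : α ∉ (algebraMap ℚ K).range := fun hα ↦ hsQ <| by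
    have hbot : ℚ⟮α⟯ = ⊥ := adjoin_simple_eq_bot_iff.mpr (mem_bot.mpr hα)
    exact mem_bot.mp (hbot ▸ hgen ▸ mem_top)
  obtain ⟨x, y, hxy⟩ :=
    exists_eq_algebraMap_add_algebraMap_mul_of_mem_adjoin hs' (hsgen ▸ mem_top : α ∈ ℚ⟮s⟯)
  have hy : y ≠ 0 := by rintro rfl; exact hαQ ⟨x, by simp [hxy]⟩
  have hmapQ : (minpoly ℤ α).map (Int.castRingHom ℚ) =
      X ^ 2 + C (-(2 * x)) * X + C (x ^ 2 - y ^ 2 * d) := by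
    rw [← algebraMap_int_eq, ← minpoly.isIntegrallyClosed_eq_field_fractions' ℚ hint, hxy,
      minpoly_algebraMap_add_algebraMap_mul hs' (hxy ▸ hαQ)]
  obtain ⟨hb, hc, hmin⟩ := eq_X_sq_add_C_mul_X_add_C_of_map_eq hmapQ
  refine ⟨hmin, ?_⟩
  generalize (minpoly ℤ α).coeff 1 = b at hb ⊢
  generalize (minpoly ℤ α).coeff 0 = c at hc ⊢
  obtain ⟨e, he⟩ := Rat.exists_intCast_eq_of_sq_mul_eq_intCast hsf (q := 2 * y)
    (n := b ^ 2 - 4 * c) (by push_cast [hb, hc]; ring)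
  refine ⟨e, by rintro rfl; simp [hy] at he, ?_⟩
  have : ((b ^ 2 - 4 * c : ℤ) : ℚ) = (e ^ 2 * d : ℤ) := by push_cast [hb, hc, he]; ring
  exact_mod_cast this

theorem smallest_integral_generators_imaginary_quadratic
    (d : ℤ) (hd : d < 0) (hsf : Squarefree d)
    (K : Type*) [Field K] [NumberField K]
    (s : K) (hs : s ^ 2 = (d : K)) (hsgen : ℚ⟮s⟯ = ⊤)
    (α : K) (hint : IsIntegral ℤ α) (hgen : ℚ⟮α⟯ = ⊤) :
    ((d % 4 = 2 ∨ d % 4 = 3) →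
      |d| ≤ max 1 (max |(minpoly ℤ α).coeff 1| |(minpoly ℤ α).coeff 0|) ∧
      (max 1 (max |(minpoly ℤ α).coeff 1| |(minpoly ℤ α).coeff 0|) = |d| ↔
        minpoly ℤ α = Polynomial.X ^ 2 - Polynomial.C d)) ∧
    (d % 4 = 1 →
      (1 - d) / 4 ≤ max 1 (max |(minpoly ℤ α).coeff 1| |(minpoly ℤ α).coeff 0|) ∧
      (max 1 (max |(minpoly ℤ α).coeff 1| |(minpoly ℤ α).coeff 0|) = (1 - d) / 4 ↔
        minpoly ℤ α = Polynomial.X ^ 2 + Polynomial.X + Polynomial.C ((1 - d) / 4) ∨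
        minpoly ℤ α = Polynomial.X ^ 2 - Polynomial.X + Polynomial.C ((1 - d) / 4))) := by
  obtain ⟨hmin, e, he0, hdisc⟩ := minpoly_int_eq_and_discr_eq_sq_mul hd hsf hs hsgen hint hgen
  set b := (minpoly ℤ α).coeff 1
  set c := (minpoly ℤ α).coeff 0
  rw [hmin, show (X ^ 2 - C d : ℤ[X]) = X ^ 2 + C 0 * X + C (-d) by simp [sub_eq_add_neg],
    show (X ^ 2 + X + C ((1 - d) / 4) : ℤ[X]) = X ^ 2 + C 1 * X + C ((1 - d) / 4) by simp,
    show (X ^ 2 - X + C ((1 - d) / 4) : ℤ[X]) = X ^ 2 + C (-1) * X + C ((1 - d) / 4) by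
      simp [sub_eq_add_neg]]
  simp only [X_sq_add_C_mul_X_add_C_inj]
  exact ⟨fun h4 ↦ height_bound_of_emod_four_eq_two_or_three hd h4 he0 hdisc,
    fun h4 ↦ height_bound_of_emod_four_eq_one hd h4 he0 hdisc⟩
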